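/- Let n, pS, pF be positive integers with p = pS + pF, p > n, p > 1. Let V be a p × p Haar-distributed orthogonal random matrix, M = ∑_{k=1}^{n} v_k v_kᵀ, and R = [I_{pS}, 0] ∈ ℝ^{pS×p}. Then E[(R M Rᵀ)²] = μ_q · I_{pS}, where μ_q = (n/(p(p+2)))·(n + pS + 1 − (pS−1)(n−1)/(p−1)). -/

import Mathlib

open MeasureTheory Matrix

instance matrixMeasurableSpace (m n : Type*) : MeasurableSpace (Matrix m n ℝ) :=
  inferInstanceAs (MeasurableSpace (m → n → ℝ))

/-!
Write `p` for the dimension and `δ = [a = a']`. For a right-invariant probability measure on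
`O(p)` fix rows `a, a'` and put `c = E[V_{ak}² V_{a'k}²]`, `d = E[V_{ak}² V_{a'l}²]`,
`e = E[V_{ak} V_{a'k} V_{al} V_{a'l}]` (`k ≠ l`); invariance under column permutations makes these
independent of `k, l`. Orthonormality of the rows gives `p c + p (p - 1) d = 1` and
`p c + p (p - 1) e = δ`. Invariance under the reflection along `e_k + 2 e_l`, which mixes columns
`k` and `l` with the rational weights `3/5, 4/5`, gives `c = d + 2 e` once the terms of odd degree
in a column are discarded (they integrate to zero by invariance under sign changes of columns).
Hence `c = (1 + 2δ) / (p (p + 2))` and `e = (δ p - 1) / ((p - 1) p (p + 2))`. Left invariance,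
through sign changes of rows, kills the off-diagonal entries of `E[(R M Rᵀ)²]`; its diagonal
entries are sums of `c`'s and `e`'s.
-/

instance matrixBorelSpace (m n : Type*) [Countable m] [Countable n] :
    BorelSpace (Matrix m n ℝ) :=
  inferInstanceAs (BorelSpace (m → n → ℝ))

theorem Continuous.integrable_of_compactSpace {X : Type*} [TopologicalSpace X] [MeasurableSpace X]
    [OpensMeasurableSpace X] [CompactSpace X] {μ : Measure X} [IsFiniteMeasure μ]
    {f : X → ℝ} (hf : Continuous f) : Integrable f μ :=
  hf.integrable_of_hasCompactSupport (.of_compactSpace f)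

theorem integral_fintype_sum {X : Type*} [TopologicalSpace X] [MeasurableSpace X]
    [OpensMeasurableSpace X] [CompactSpace X] {μ : Measure X} [IsFiniteMeasure μ] {κ : Type*}
    [Fintype κ] {f : κ → X → ℝ} (hf : ∀ k, Continuous (f k)) :
    ∫ x, ∑ k, f k x ∂μ = ∑ k, ∫ x, f k x ∂μ :=
  integral_finsetSum _ fun k _ => (hf k).integrable_of_compactSpace

theorem Equiv.Perm.exists_apply_eq_and_apply_eq {α : Type*} [DecidableEq α] {k l k' l' : α}
    (h : k ≠ l) (h' : k' ≠ l') : ∃ σ : Equiv.Perm α, σ k = k' ∧ σ l = l' := by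
  refine ⟨Equiv.swap (Equiv.swap k k' l) l' * Equiv.swap k k', ?_, by simp⟩
  have hk' : k' ≠ Equiv.swap k k' l := fun he =>
    h ((Equiv.swap k k').injective ((Equiv.swap_apply_left k k').trans he))
  rw [Equiv.Perm.mul_apply, Equiv.swap_apply_left, Equiv.swap_apply_of_ne_of_ne hk' h']

theorem eq_ite_of_perm_invariant {α : Type*} [DecidableEq α] {F : α → α → ℝ}
    (hF : ∀ (σ : Equiv.Perm α) k l, F (σ k) (σ l) = F k l) {k₀ l₀ : α} (h₀ : k₀ ≠ l₀) (k l : α) :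
    F k l = if k = l then F k₀ k₀ else F k₀ l₀ := by
  split_ifs with h
  · subst h; simpa using hF (Equiv.swap k₀ k) k₀ k₀
  · obtain ⟨σ, rfl, rfl⟩ := Equiv.Perm.exists_apply_eq_and_apply_eq h₀ h
    exact hF σ k₀ l₀

variable {ι : Type*} [Fintype ι] [DecidableEq ι]

theorem sum_ite_eq_add (k : ι) (c d : ℝ) :
    ∑ l : ι, (if k = l then c else d) = c + (Fintype.card ι - 1) * d := by
  have : ∀ l : ι, (if k = l then c else d) = d + if k = l then c - d else 0 := by
    intro l; split_ifs <;> ring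
  simp [this, Finset.sum_add_distrib]
  ring

theorem sum_sum_ite_eq (c d : ℝ) :
    ∑ k : ι, ∑ l : ι, (if k = l then c else d) =
      Fintype.card ι * c + Fintype.card ι * (Fintype.card ι - 1) * d := by
  simp [sum_ite_eq_add]
  ring

namespace Matrix

theorem sum_mul_entry_of_mem_orthogonalGroup {V : Matrix ι ι ℝ} (hV : V ∈ orthogonalGroup ι ℝ)
    (a a' : ι) : ∑ k, V a k * V a' k = if a = a' then 1 else 0 := by
  simpa [mul_apply, one_apply] using congrFun₂ ((mem_orthogonalGroup_iff ι ℝ).mp hV) a a'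

theorem abs_entry_le_one_of_mem_orthogonalGroup {V : Matrix ι ι ℝ}
    (hV : V ∈ orthogonalGroup ι ℝ) (a k : ι) : |V a k| ≤ 1 := by
  have hrow := sum_mul_entry_of_mem_orthogonalGroup hV a a
  rw [if_pos rfl] at hrow
  rw [← sq_le_one_iff_abs_le_one, sq, ← hrow]
  exact Finset.single_le_sum (f := fun j => V a j * V a j) (fun j _ => mul_self_nonneg _)
    (Finset.mem_univ k)

theorem isCompact_orthogonalGroup : IsCompact (orthogonalGroup ι ℝ : Set (Matrix ι ι ℝ)) := by
  have hclosed : IsClosed (orthogonalGroup ι ℝ : Set (Matrix ι ι ℝ)) := by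
    have : (orthogonalGroup ι ℝ : Set (Matrix ι ι ℝ)) = {A | A * Aᵀ = 1} :=
      Set.ext fun A => mem_orthogonalGroup_iff ι ℝ
    rw [this]
    exact isClosed_eq (continuous_id.matrix_mul continuous_id.matrix_transpose) continuous_const
  refine (isCompact_Icc (a := (-1 : ℝ)) (b := 1)).matrix.of_isClosed_subset hclosed ?_
  intro V hV a k
  exact abs_le.mp (abs_entry_le_one_of_mem_orthogonalGroup hV a k)

instance : CompactSpace (orthogonalGroup ι ℝ) :=
  isCompact_iff_compactSpace.mp isCompact_orthogonalGroup

@[fun_prop]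
theorem continuous_orthogonalGroup_entry (a k : ι) :
    Continuous fun V : orthogonalGroup ι ℝ => V.1 a k :=
  continuous_subtype_val.matrix_elem a k

theorem permMatrix_mem_orthogonalGroup (σ : Equiv.Perm ι) :
    σ.permMatrix ℝ ∈ orthogonalGroup ι ℝ := by
  simp [mem_orthogonalGroup_iff, ← permMatrix_mul]

theorem diagonal_mem_orthogonalGroup {d : ι → ℝ} (hd : ∀ i, d i * d i = 1) :
    diagonal d ∈ orthogonalGroup ι ℝ := by
  simp [mem_orthogonalGroup_iff, diagonal_mul_diagonal, hd]

omit [Fintype ι] in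
theorem update_one_neg_one_mul_self (k j : ι) :
    Function.update (1 : ι → ℝ) k (-1) j * Function.update (1 : ι → ℝ) k (-1) j = 1 := by
  rcases eq_or_ne j k with rfl | h <;> simp [*]

noncomputable def householder (w : ι → ℝ) : Matrix ι ι ℝ :=
  1 - (2 / (w ⬝ᵥ w)) • vecMulVec w w

theorem householder_mem_orthogonalGroup {w : ι → ℝ} (hw : w ⬝ᵥ w ≠ 0) :
    householder w ∈ orthogonalGroup ι ℝ := by
  rw [mem_orthogonalGroup_iff, householder]
  simp only [transpose_sub, transpose_one, transpose_smul, transpose_vecMulVec, Matrix.sub_mul,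
    Matrix.mul_sub, Matrix.one_mul, Matrix.mul_one, Matrix.smul_mul, Matrix.mul_smul,
    vecMulVec_mul_vecMulVec, vecMulVec_smul, smul_sub, smul_smul]
  have : 2 / (w ⬝ᵥ w) * (2 / (w ⬝ᵥ w) * (w ⬝ᵥ w)) = 2 / (w ⬝ᵥ w) + 2 / (w ⬝ᵥ w) := by
    field_simp; ring
  rw [this, add_smul]
  abel

theorem mul_householder_apply {κ : Type*} (A : Matrix κ ι ℝ) (w : ι → ℝ) (a : κ) (j : ι) :
    (A * householder w) a j = A a j - 2 / (w ⬝ᵥ w) * (A *ᵥ w) a * w j := by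
  simp [householder, Matrix.mul_sub, Matrix.mul_smul, mul_vecMulVec, vecMulVec_apply, mul_assoc]

theorem dotProduct_self_single_add_single {k l : ι} (hkl : k ≠ l) :
    (Pi.single k 1 + Pi.single l 2 : ι → ℝ) ⬝ᵥ (Pi.single k 1 + Pi.single l 2) = 5 := by
  simp [dotProduct_add, hkl, hkl.symm]
  norm_num

theorem mul_householder_single_add_single_apply {κ : Type*} {k l : ι} (hkl : k ≠ l)
    (A : Matrix κ ι ℝ) (b : κ) :
    (A * householder (Pi.single k 1 + Pi.single l 2 : ι → ℝ)) b k =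
      3 / 5 * A b k - 4 / 5 * A b l := by
  simp [mul_householder_apply, dotProduct_self_single_add_single hkl, mulVec_add, mulVec_single,
    hkl.symm]
  ring

end Matrix

open Matrix

section RightInvariant

variable (μ : Measure (orthogonalGroup ι ℝ)) (hμ : ∀ g, μ.map (fun V => V * g) = μ)
include hμ

theorem integral_comp_mul_right_of_map_eq (g : orthogonalGroup ι ℝ)
    (f : orthogonalGroup ι ℝ → ℝ) : ∫ V, f (V * g) ∂μ = ∫ V, f V ∂μ :=
  MeasurePreserving.integral_comp ⟨(continuous_mul_const g).measurable, hμ g⟩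
    (Homeomorph.mulRight g).measurableEmbedding f

theorem integral_submatrix_perm (σ : Equiv.Perm ι) (F : Matrix ι ι ℝ → ℝ) :
    ∫ V, F (V.1.submatrix id σ) ∂μ = ∫ V, F V.1 ∂μ := by
  simpa [PEquiv.mul_toMatrix_toPEquiv] using integral_comp_mul_right_of_map_eq μ hμ
    ⟨_, permMatrix_mem_orthogonalGroup σ.symm⟩ (fun V => F V.1)

theorem integral_eq_zero_of_neg_col (k : ι) (F : Matrix ι ι ℝ → ℝ)
    (hF : ∀ A, F (A * diagonal (Function.update 1 k (-1))) = -F A) : ∫ V, F V.1 ∂μ = 0 := by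
  have := integral_comp_mul_right_of_map_eq μ hμ
    ⟨_, diagonal_mem_orthogonalGroup (update_one_neg_one_mul_self k)⟩ (fun V => F V.1)
  simp only [Submonoid.coe_mul, hF, integral_neg] at this
  linarith

theorem integral_sq_mul_sq_eq_add [IsFiniteMeasure μ] {k l : ι} (hkl : k ≠ l) (a a' : ι) :
    ∫ V, V.1 a k ^ 2 * V.1 a' k ^ 2 ∂μ =
      ∫ V, V.1 a k ^ 2 * V.1 a' l ^ 2 ∂μ + 2 * ∫ V, V.1 a k * V.1 a' k * V.1 a l * V.1 a' l ∂μ := by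
  have hswap₁ := integral_submatrix_perm μ hμ (Equiv.swap k l) fun A => A a l ^ 2 * A a' l ^ 2
  have hswap₂ := integral_submatrix_perm μ hμ (Equiv.swap k l) fun A => A a l ^ 2 * A a' k ^ 2
  simp only [submatrix_apply, id, Equiv.swap_apply_right, Equiv.swap_apply_left] at hswap₁ hswap₂
  set odd : Matrix ι ι ℝ → ℝ := fun A =>
    -216 * (A a k ^ 2 * A a' k * A a' l) - 216 * (A a k * A a l * A a' k ^ 2)
      - 384 * (A a k * A a l * A a' l ^ 2) - 384 * (A a l ^ 2 * A a' k * A a' l)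
  have hodd_cont : Continuous fun V : orthogonalGroup ι ℝ => odd V.1 := by
    simp only [odd]; fun_prop
  have hodd : ∫ V, odd V.1 ∂μ = 0 := by
    refine integral_eq_zero_of_neg_col μ hμ k odd fun A => ?_
    simp [odd, mul_diagonal, hkl.symm]
    ring
  have hrefl := integral_comp_mul_right_of_map_eq μ hμ
    ⟨_, householder_mem_orthogonalGroup (w := Pi.single k 1 + Pi.single l 2)
      (by simp [dotProduct_self_single_add_single hkl])⟩
    fun V => V.1 a k ^ 2 * V.1 a' k ^ 2
  have hexpand : ∀ A : Matrix ι ι ℝ,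
      (3 / 5 * A a k - 4 / 5 * A a l) ^ 2 * (3 / 5 * A a' k - 4 / 5 * A a' l) ^ 2 =
        1 / 625 * (81 * (A a k ^ 2 * A a' k ^ 2) + 256 * (A a l ^ 2 * A a' l ^ 2)
          + 144 * (A a k ^ 2 * A a' l ^ 2) + 144 * (A a l ^ 2 * A a' k ^ 2)
          + 576 * (A a k * A a' k * A a l * A a' l) + odd A) := by
    intro A; simp only [odd]; ring
  simp only [Submonoid.coe_mul, mul_householder_single_add_single_apply hkl, hexpand] at hrefl
  rw [integral_const_mul, integral_add, integral_add, integral_add, integral_add, integral_add,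
    integral_const_mul, integral_const_mul, integral_const_mul, integral_const_mul,
    integral_const_mul, hodd] at hrefl
  · linarith
  all_goals exact Continuous.integrable_of_compactSpace (by fun_prop)

end RightInvariant

section LeftInvariant

variable (μ : Measure (orthogonalGroup ι ℝ)) (hμ : ∀ g, μ.map (fun V => g * V) = μ)
include hμ

theorem integral_comp_mul_left_of_map_eq (g : orthogonalGroup ι ℝ)
    (f : orthogonalGroup ι ℝ → ℝ) : ∫ V, f (g * V) ∂μ = ∫ V, f V ∂μ :=
  MeasurePreserving.integral_comp ⟨(continuous_const_mul g).measurable, hμ g⟩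
    (Homeomorph.mulLeft g).measurableEmbedding f

theorem integral_eq_zero_of_neg_row (r : ι) (F : Matrix ι ι ℝ → ℝ)
    (hF : ∀ A, F (diagonal (Function.update 1 r (-1)) * A) = -F A) : ∫ V, F V.1 ∂μ = 0 := by
  have := integral_comp_mul_left_of_map_eq μ hμ
    ⟨_, diagonal_mem_orthogonalGroup (update_one_neg_one_mul_self r)⟩ (fun V => F V.1)
  simp only [Submonoid.coe_mul, hF, integral_neg] at this
  linarith

end LeftInvariant

section RowSums

variable (μ : Measure (orthogonalGroup ι ℝ)) [IsProbabilityMeasure μ]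

theorem sum_sum_integral_sq_mul_sq (a a' : ι) :
    ∑ k, ∑ l, ∫ V, V.1 a k ^ 2 * V.1 a' l ^ 2 ∂μ = 1 := by
  have hrow : ∀ (V : orthogonalGroup ι ℝ) b, ∑ k, V.1 b k ^ 2 = 1 := fun V b => by
    simpa [sq] using sum_mul_entry_of_mem_orthogonalGroup V.2 b b
  simp (disch := intro; fun_prop) only [← integral_fintype_sum]
  simp [← Finset.sum_mul_sum, hrow]

theorem sum_sum_integral_cross (a a' : ι) :
    ∑ k, ∑ l, ∫ V, V.1 a k * V.1 a' k * V.1 a l * V.1 a' l ∂μ = if a = a' then 1 else 0 := by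
  have hprod : ∀ V : orthogonalGroup ι ℝ, ∑ k, ∑ l, V.1 a k * V.1 a' k * V.1 a l * V.1 a' l =
      (∑ k, V.1 a k * V.1 a' k) * ∑ l, V.1 a l * V.1 a' l := fun V => by
    rw [Finset.sum_mul_sum]; simp only [mul_assoc]
  simp (disch := intro; fun_prop) only [← integral_fintype_sum]
  simp [hprod, sum_mul_entry_of_mem_orthogonalGroup]

end RowSums

theorem integral_cross_moment (μ : Measure (orthogonalGroup ι ℝ)) [IsProbabilityMeasure μ]
    (hμ : ∀ g, μ.map (fun V => V * g) = μ) (hp : 1 < Fintype.card ι) (a a' k l : ι) :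
    ∫ V, V.1 a k * V.1 a' k * V.1 a l * V.1 a' l ∂μ =
      (if a = a' then (if k = l then 3 else 1)
        else (if k = l then 1 else -1 / (Fintype.card ι - 1)) : ℝ)
        / (Fintype.card ι * (Fintype.card ι + 2)) := by
  obtain ⟨k₀, l₀, h₀⟩ := Fintype.exists_pair_of_one_lt_card hp
  set S : ι → ι → ℝ := fun k l => ∫ V, V.1 a k ^ 2 * V.1 a' l ^ 2 ∂μ
  set X : ι → ι → ℝ := fun k l => ∫ V, V.1 a k * V.1 a' k * V.1 a l * V.1 a' l ∂μ
  have hXS : ∀ k, X k k = S k k := fun k => by simp only [X, S]; congr 1; ext V; ring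
  have hS : ∀ k l, S k l = if k = l then S k₀ k₀ else S k₀ l₀ := by
    refine eq_ite_of_perm_invariant (fun σ k l => ?_) h₀
    simpa using integral_submatrix_perm μ hμ σ fun A => A a k ^ 2 * A a' l ^ 2
  have hX : ∀ k l, X k l = if k = l then S k₀ k₀ else X k₀ l₀ := by
    rw [← hXS]
    refine eq_ite_of_perm_invariant (fun σ k l => ?_) h₀
    simpa using integral_submatrix_perm μ hμ σ fun A => A a k * A a' k * A a l * A a' l
  have hrefl : S k₀ k₀ = S k₀ l₀ + 2 * X k₀ l₀ := integral_sq_mul_sq_eq_add μ hμ h₀ a a'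
  have hnorm : ∑ k, ∑ l, S k l = 1 := sum_sum_integral_sq_mul_sq μ a a'
  have horth : ∑ k, ∑ l, X k l = if a = a' then 1 else 0 := sum_sum_integral_cross μ a a'
  generalize S k₀ k₀ = c at hS hX hrefl
  generalize S k₀ l₀ = d at hS hrefl
  generalize X k₀ l₀ = e at hX hrefl
  simp only [hS, hX, sum_sum_ite_eq] at hnorm horth
  change X k l = _
  set p : ℝ := (Fintype.card ι : ℝ)
  have hp1 : p - 1 ≠ 0 := sub_ne_zero.mpr (by simp [p]; omega)
  have hp2 : p * (p + 2) ≠ 0 := by positivity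
  have hc : c * (p * (p + 2)) = 1 + 2 * (if a = a' then 1 else 0) := by
    linear_combination (p * (p - 1)) * hrefl + hnorm + 2 * horth
  have he : (p - 1) * (e * (p * (p + 2))) = (if a = a' then 1 else 0) * p - 1 := by
    linear_combination (p + 2) * horth - hc
  rw [hX, eq_div_iff hp2]
  by_cases haa : a = a' <;> by_cases hkl : k = l <;>
    simp only [haa, hkl, if_true, if_false] at hc he ⊢
  · linear_combination hc
  · exact mul_left_cancel₀ hp1 (by linear_combination he)
  · linear_combination hc
  · rw [eq_div_iff hp1]; linear_combination he

theorem integral_chain_moment (μ : Measure (orthogonalGroup ι ℝ)) [IsProbabilityMeasure μ]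
    (hleft : ∀ g, μ.map (fun V => g * V) = μ) (hright : ∀ g, μ.map (fun V => V * g) = μ)
    (hp : 1 < Fintype.card ι) (a b c k l : ι) :
    ∫ V, V.1 a k * V.1 b k * V.1 b l * V.1 c l ∂μ =
      if a = c then
        (if a = b then (if k = l then 3 else 1)
          else (if k = l then 1 else -1 / (Fintype.card ι - 1)) : ℝ)
          / (Fintype.card ι * (Fintype.card ι + 2))
      else 0 := by
  by_cases hac : a = c
  · subst hac
    rw [if_pos rfl, ← integral_cross_moment μ hright hp]
    congr 1; ext V; ring
  · rw [if_neg hac]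
    refine integral_eq_zero_of_neg_row μ hleft c (fun A => A a k * A b k * A b l * A c l)
      fun A => ?_
    rcases eq_or_ne b c with rfl | hbc
    · simp [diagonal_mul, hac]
    · simp [diagonal_mul, hac, hbc]

theorem mul_mul_transpose_eq_submatrix_castLE {m q : ℕ} (h : m ≤ q) (R : Matrix (Fin m) (Fin q) ℝ)
    (hR : ∀ a b, R a b = if (b : ℕ) = (a : ℕ) then 1 else 0) (A : Matrix (Fin q) (Fin q) ℝ) :
    R * A * Rᵀ = A.submatrix (Fin.castLE h) (Fin.castLE h) := by
  have hR' : ∀ a b, R a b = if b = Fin.castLE h a then 1 else 0 := fun a b => by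
    simp [hR, Fin.ext_iff]
  ext x y
  simp [mul_apply, hR']

theorem stmt19_general (n pS pF : ℕ)
    (p : ℕ) (hp : p = pS + pF) (hnp : n < p) (hp1 : 1 < p)
    (μ : Measure ↥(Matrix.orthogonalGroup (Fin p) ℝ)) [IsProbabilityMeasure μ]
    (hleft : ∀ g : ↥(Matrix.orthogonalGroup (Fin p) ℝ),
      μ.map (fun V => g * V) = μ)
    (hright : ∀ g : ↥(Matrix.orthogonalGroup (Fin p) ℝ),
      μ.map (fun V => V * g) = μ)
    (R : Matrix (Fin pS) (Fin p) ℝ)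
    (hR : ∀ (a : Fin pS) (b : Fin p), R a b = if (b : ℕ) = (a : ℕ) then 1 else 0)
    (M : ↥(Matrix.orthogonalGroup (Fin p) ℝ) → Matrix (Fin p) (Fin p) ℝ)
    (hM : ∀ V, M V = ∑ k : Fin n,
      Matrix.vecMulVec (fun a => (V : Matrix (Fin p) (Fin p) ℝ) a (Fin.castLE hnp.le k))
        (fun a => (V : Matrix (Fin p) (Fin p) ℝ) a (Fin.castLE hnp.le k)))
    (i j : Fin pS) :
    ∫ V, ((R * M V * Rᵀ) * (R * M V * Rᵀ)) i j ∂μ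
      = ((n : ℝ) / ((p : ℝ) * ((p : ℝ) + 2)))
          * ((n : ℝ) + pS + 1 - ((pS : ℝ) - 1) * ((n : ℝ) - 1) / ((p : ℝ) - 1))
          * (1 : Matrix (Fin pS) (Fin pS) ℝ) i j := by
  have hpS : pS ≤ p := hp ▸ Nat.le_add_right pS pF
  set e := Fin.castLE hpS
  set c := Fin.castLE hnp.le
  have hQ : ∀ V : orthogonalGroup (Fin p) ℝ, ((R * M V * Rᵀ) * (R * M V * Rᵀ)) i j =
      ∑ l, ∑ k, ∑ k', V.1 (e i) (c k) * V.1 (e l) (c k) * V.1 (e l) (c k') * V.1 (e j) (c k') := by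
    intro V
    simp only [mul_mul_transpose_eq_submatrix_castLE hpS R hR, hM, mul_apply, submatrix_apply,
      Matrix.sum_apply, vecMulVec_apply, Finset.sum_mul_sum, mul_assoc]
    rfl
  simp_rw [hQ]
  simp (disch := intro; fun_prop) only [integral_fintype_sum]
  simp only [integral_chain_moment μ hleft hright (by simpa using hp1), e, c, Fin.castLE_inj,
    Fintype.card_fin]
  rcases eq_or_ne i j with rfl | hij
  · simp only [if_true, one_apply_eq, ← Finset.sum_div, Finset.sum_ite_irrel, sum_ite_eq_add,
      Finset.sum_const, Finset.card_univ, Fintype.card_fin, nsmul_eq_mul]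
    field_simp
    ring
  · simp [hij]

/-- Lemma 2, first claim (Haar SVD reduction): with `M = ∑_{k<n} v_k v_kᵀ` for a
Haar-distributed `p × p` orthogonal matrix `V` and `R = [I_{pS}, 0]`,
`E[(R M Rᵀ)²] = μ_q · I_{pS}` where
`μ_q = (n/(p(p+2)))·(n + pS + 1 − (pS−1)(n−1)/(p−1))` (entrywise). -/
theorem stmt19 (n pS pF : ℕ) (hn : 0 < n) (hpS : 0 < pS) (hpF : 0 < pF)
    (p : ℕ) (hp : p = pS + pF) (hnp : n < p) (hp1 : 1 < p)
    (μ : Measure ↥(Matrix.orthogonalGroup (Fin p) ℝ)) [IsProbabilityMeasure μ]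
    (hleft : ∀ g : ↥(Matrix.orthogonalGroup (Fin p) ℝ),
      μ.map (fun V => g * V) = μ)
    (hright : ∀ g : ↥(Matrix.orthogonalGroup (Fin p) ℝ),
      μ.map (fun V => V * g) = μ)
    (R : Matrix (Fin pS) (Fin p) ℝ)
    (hR : ∀ (a : Fin pS) (b : Fin p), R a b = if (b : ℕ) = (a : ℕ) then 1 else 0)
    (M : ↥(Matrix.orthogonalGroup (Fin p) ℝ) → Matrix (Fin p) (Fin p) ℝ)
    (hM : ∀ V, M V = ∑ k : Fin n,
      Matrix.vecMulVec (fun a => (V : Matrix (Fin p) (Fin p) ℝ) a (Fin.castLE hnp.le k))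
        (fun a => (V : Matrix (Fin p) (Fin p) ℝ) a (Fin.castLE hnp.le k)))
    (i j : Fin pS) :
    ∫ V, ((R * M V * Rᵀ) * (R * M V * Rᵀ)) i j ∂μ
      = ((n : ℝ) / ((p : ℝ) * ((p : ℝ) + 2)))
          * ((n : ℝ) + pS + 1 - ((pS : ℝ) - 1) * ((n : ℝ) - 1) / ((p : ℝ) - 1))
          * (1 : Matrix (Fin pS) (Fin pS) ℝ) i j :=
  stmt19_general n pS pF p hp hnp hp1 μ hleft hright R hR M hM i j
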